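/- arXiv:0705.4312 — 6 statements merged into one kernel-verified Lean document; each statement's English description precedes it below -/
import Mathlib

section
/- Let Θ be the standard simplex in ℝ^k and let (μ_n) be a sequence of Borel probability measures on Θ. Let f : Θ → ℝ be a nonnegative bounded continuous function with f_max = sup_{θ∈Θ} f(θ), and for δ > 0 set Θ_δ = {θ ∈ Θ : f(θ) ≥ f_max − δ}. Let L : Θ → ℝ be a nonnegative bounded measurable function such that lim_{δ→0} inf_{θ∈Θ_δ} L(θ) = c > 0. If ∫_Θ f dμ_n → f_max as n → ∞, then ∫_Θ L dμ_n > 0 for all sufficiently large n and (∫_Θ f·L dμ_n)/(∫_Θ L dμ_n) → f_max as n → ∞. -/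
/-!
Markov's inequality for `fmax - f` shows that `∫ f dμₙ → fmax` forces `μₙ` to put
asymptotically all of its mass on every superlevel set `{f > fmax - δ}`. For small `δ` we have
`L ≥ c / 2` there, so `∫ L dμₙ ≥ c / 4` eventually. The ratio is at most `fmax`, and its defect
is `∫ (fmax - f) L dμₙ / ∫ L dμₙ ≤ C (fmax - ∫ f dμₙ) / (c / 4) → 0`, where `L ≤ C`.
-/

open MeasureTheory Filter Topology

theorem exists_pos_forall_le_of_tendsto_sInf {X : Type*} {f L : X → ℝ} {M c b : ℝ}
    (hL : BddBelow (Set.range L))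
    (hlim : Tendsto (fun δ => sInf (L '' {x | M - δ ≤ f x})) (𝓝[>] 0) (𝓝 c)) (hb : b < c) :
    ∃ δ > 0, ∀ x, M - δ ≤ f x → b ≤ L x := by
  obtain ⟨δ, hbδ, hδ⟩ := ((hlim.eventually (lt_mem_nhds hb)).and self_mem_nhdsWithin).exists
  exact ⟨δ, hδ, fun x hx =>
    hbδ.le.trans (csInf_le (hL.mono (Set.image_subset_range _ _)) ⟨x, hx, rfl⟩)⟩

namespace MeasureTheory

variable {Ω ι : Type*} [MeasurableSpace Ω] {f L : Ω → ℝ} {M C : ℝ}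

theorem Integrable.of_nonneg_of_le {μ : Measure Ω} [IsFiniteMeasure μ] (hf : Measurable f)
    (hf0 : ∀ x, 0 ≤ f x) (hfC : ∀ x, f x ≤ C) : Integrable f μ :=
  .of_bound hf.aestronglyMeasurable C <| ae_of_all μ fun x => by
    rw [Real.norm_of_nonneg (hf0 x)]
    exact hfC x

theorem Integrable.mul_of_nonneg_of_le {μ : Measure Ω} (hf : Integrable f μ)
    (hL : Integrable L μ) (hL0 : ∀ x, 0 ≤ L x) (hLC : ∀ x, L x ≤ C) :
    Integrable (fun x => f x * L x) μ :=
  hf.mul_bdd hL.aestronglyMeasurable <| ae_of_all μ fun x => by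
    rw [Real.norm_of_nonneg (hL0 x)]
    exact hLC x

theorem integral_mul_le_mul_integral {μ : Measure Ω} (hf : Integrable f μ) (hfM : ∀ x, f x ≤ M)
    (hL : Integrable L μ) (hL0 : ∀ x, 0 ≤ L x) (hLC : ∀ x, L x ≤ C) :
    ∫ x, f x * L x ∂μ ≤ M * ∫ x, L x ∂μ := by
  rw [← integral_const_mul]
  exact integral_mono (hf.mul_of_nonneg_of_le hL hL0 hLC) (hL.const_mul M)
    fun x => mul_le_mul_of_nonneg_right (hfM x) (hL0 x)

theorem mul_integral_sub_le_integral_mul {μ : Measure Ω} [IsProbabilityMeasure μ]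
    (hf : Integrable f μ) (hfM : ∀ x, f x ≤ M) (hL : Integrable L μ) (hL0 : ∀ x, 0 ≤ L x)
    (hLC : ∀ x, L x ≤ C) :
    M * ∫ x, L x ∂μ - C * (M - ∫ x, f x ∂μ) ≤ ∫ x, f x * L x ∂μ := by
  have hMf : Integrable (fun x => M - f x) μ := (integrable_const M).sub hf
  have h : ∫ x, (M - f x) * L x ∂μ ≤ ∫ x, C * (M - f x) ∂μ :=
    integral_mono (hMf.mul_of_nonneg_of_le hL hL0 hLC) (hMf.const_mul C) fun x => by
      rw [mul_comm C]
      exact mul_le_mul_of_nonneg_left (hLC x) (sub_nonneg.2 (hfM x))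
  simp only [sub_mul] at h
  rw [integral_sub (hL.const_mul M) (hf.mul_of_nonneg_of_le hL hL0 hLC), integral_const_mul,
    integral_const_mul, integral_sub (integrable_const M) hf, integral_const, probReal_univ,
    one_smul] at h
  linarith

theorem mul_measureReal_setOf_le_sub_le (μ : Measure Ω) [IsProbabilityMeasure μ]
    (hf : Integrable f μ) (hfM : ∀ x, f x ≤ M) (δ : ℝ) :
    δ * μ.real {x | f x ≤ M - δ} ≤ M - ∫ x, f x ∂μ := by
  have h := mul_meas_ge_le_integral_of_nonneg (ae_of_all μ fun x => sub_nonneg.2 (hfM x))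
    ((integrable_const M).sub hf) δ
  simp only [le_sub_comm (a := δ)] at h
  rwa [integral_sub (integrable_const M) hf, integral_const, probReal_univ, one_smul] at h

variable {μ : ι → Measure Ω} [∀ i, IsProbabilityMeasure (μ i)] {l : Filter ι}

theorem tendsto_measureReal_setOf_sub_lt_of_tendsto_integral (hf_meas : Measurable f)
    (hf : ∀ i, Integrable f (μ i)) (hfM : ∀ x, f x ≤ M)
    (hconv : Tendsto (fun i => ∫ x, f x ∂μ i) l (𝓝 M)) {δ : ℝ} (hδ : 0 < δ) :
    Tendsto (fun i => (μ i).real {x | M - δ < f x}) l (𝓝 1) := by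
  have hsmall : Tendsto (fun i => (μ i).real {x | f x ≤ M - δ}) l (𝓝 0) := by
    refine squeeze_zero (fun i => measureReal_nonneg) (fun i => ?_)
      (by simpa using (hconv.const_sub M).div_const δ)
    rw [le_div_iff₀' hδ]
    exact mul_measureReal_setOf_le_sub_le (μ i) (hf i) hfM δ
  have hcompl : ∀ i, (μ i).real {x | M - δ < f x} = 1 - (μ i).real {x | f x ≤ M - δ} :=
    fun i => by
      simpa only [Set.compl_ofPred, not_le] using
        probReal_compl_eq_one_sub (μ := μ i) (measurableSet_le hf_meas measurable_const)
  simpa [hcompl] using hsmall.const_sub 1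

theorem eventually_lt_integral_of_le_on_superlevel (hf_meas : Measurable f)
    (hf : ∀ i, Integrable f (μ i)) (hfM : ∀ x, f x ≤ M)
    (hconv : Tendsto (fun i => ∫ x, f x ∂μ i) l (𝓝 M))
    (hL : ∀ i, Integrable L (μ i)) (hL0 : ∀ x, 0 ≤ L x) {δ b b' : ℝ} (hδ : 0 < δ)
    (hLb : ∀ x, M - δ < f x → b ≤ L x) (hb : b' < b) :
    ∀ᶠ i in l, b' < ∫ x, L x ∂μ i := by
  set S := {x | M - δ < f x}
  have hS : MeasurableSet S := measurableSet_lt measurable_const hf_meas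
  have hmass : Tendsto (fun i => b * (μ i).real S) l (𝓝 b) := by
    simpa using (tendsto_measureReal_setOf_sub_lt_of_tendsto_integral hf_meas hf hfM hconv
      hδ).const_mul b
  filter_upwards [hmass.eventually (lt_mem_nhds hb)] with i hi
  calc b' < b * (μ i).real S := hi
    _ ≤ ∫ x in S, L x ∂μ i :=
      setIntegral_ge_of_const_le_real hS (measure_ne_top _ _) hLb (hL i).integrableOn
    _ ≤ ∫ x, L x ∂μ i := setIntegral_le_integral (hL i) (ae_of_all _ hL0)

theorem tendsto_integral_mul_div_integral (hf : ∀ i, Integrable f (μ i)) (hfM : ∀ x, f x ≤ M)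
    (hconv : Tendsto (fun i => ∫ x, f x ∂μ i) l (𝓝 M)) (hL : ∀ i, Integrable L (μ i))
    (hL0 : ∀ x, 0 ≤ L x) (hLC : ∀ x, L x ≤ C) {b : ℝ} (hb : 0 < b)
    (hLb : ∀ᶠ i in l, b ≤ ∫ x, L x ∂μ i) :
    Tendsto (fun i => (∫ x, f x * L x ∂μ i) / ∫ x, L x ∂μ i) l (𝓝 M) := by
  have hlower : Tendsto (fun i => M - C * (M - ∫ x, f x ∂μ i) / b) l (𝓝 M) := by
    simpa using (((hconv.const_sub M).const_mul C).div_const b).const_sub M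
  refine tendsto_of_tendsto_of_tendsto_of_le_of_le' hlower tendsto_const_nhds ?_ ?_
  all_goals filter_upwards [hLb] with i hi
  all_goals have hI : 0 < ∫ x, L x ∂μ i := hb.trans_le hi
  · have hC : 0 ≤ C := by
      obtain ⟨x⟩ := nonempty_of_isProbabilityMeasure (μ i)
      exact (hL0 x).trans (hLC x)
    have hfM' : ∫ x, f x ∂μ i ≤ M := by
      simpa using integral_mono (hf i) (integrable_const M) hfM
    have hdeficit : 0 ≤ C * (M - ∫ x, f x ∂μ i) := mul_nonneg hC (sub_nonneg.2 hfM')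
    rw [le_div_iff₀ hI]
    calc (M - C * (M - ∫ x, f x ∂μ i) / b) * ∫ x, L x ∂μ i
        ≤ M * ∫ x, L x ∂μ i - C * (M - ∫ x, f x ∂μ i) := by
          rw [sub_mul, div_mul_eq_mul_div, sub_le_sub_iff_left, le_div_iff₀ hb]
          exact mul_le_mul_of_nonneg_left hi hdeficit
      _ ≤ ∫ x, f x * L x ∂μ i := mul_integral_sub_le_integral_mul (hf i) hfM (hL i) hL0 hLC
  · rw [div_le_iff₀ hI]
    exact integral_mul_le_mul_integral (hf i) hfM (hL i) hL0 hLC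

end MeasureTheory

/-- **Theorem 3 (technical preliminaries).**
Let `Θ` be the standard simplex in `ℝ^k` and `(μ n)` a sequence of Borel probability
measures on `Θ`.  Let `f : Θ → ℝ` be a nonnegative bounded continuous function with
supremum `fmax`, and for `δ > 0` let `Θ_δ = {θ ∈ Θ | f θ ≥ fmax - δ}`.  Let
`L : Θ → ℝ` be a nonnegative bounded measurable function with
`lim_{δ→0⁺} inf_{θ ∈ Θ_δ} L θ = c > 0`.  If `∫ f dμ_n → fmax`, then eventually
`∫ L dμ_n > 0` and `(∫ f·L dμ_n) / (∫ L dμ_n) → fmax`. -/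
theorem posterior_concentration_on_maximum
    (k : ℕ)
    (μ : ℕ → Measure (stdSimplex ℝ (Fin k)))
    (hμ : ∀ n, IsProbabilityMeasure (μ n))
    (f : stdSimplex ℝ (Fin k) → ℝ)
    (hf_nonneg : ∀ θ, 0 ≤ f θ)
    (hf_cont : Continuous f)
    (fmax : ℝ)
    (hfmax : IsLUB (Set.range f) fmax)
    (L : stdSimplex ℝ (Fin k) → ℝ)
    (hL_nonneg : ∀ θ, 0 ≤ L θ)
    (hL_bdd : ∃ C, ∀ θ, L θ ≤ C)
    (hL_meas : Measurable L)
    (c : ℝ) (hc : 0 < c)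
    (hlim : Tendsto (fun δ => sInf (L '' {θ | fmax - δ ≤ f θ})) (𝓝[>] (0 : ℝ)) (𝓝 c))
    (hconv : Tendsto (fun n => ∫ θ, f θ ∂(μ n)) atTop (𝓝 fmax)) :
    (∀ᶠ n in atTop, 0 < ∫ θ, L θ ∂(μ n)) ∧
      Tendsto (fun n => (∫ θ, f θ * L θ ∂(μ n)) / (∫ θ, L θ ∂(μ n))) atTop (𝓝 fmax) := by
  have := hμ
  obtain ⟨C, hLC⟩ := hL_bdd
  have hf_meas : Measurable f := hf_cont.measurable
  have hf_le : ∀ θ, f θ ≤ fmax := fun θ => hfmax.1 ⟨θ, rfl⟩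
  have hf_int (n : ℕ) : Integrable f (μ n) := .of_nonneg_of_le hf_meas hf_nonneg hf_le
  have hL_int (n : ℕ) : Integrable L (μ n) := .of_nonneg_of_le hL_meas hL_nonneg hLC
  obtain ⟨δ, hδ, hLδ⟩ := exists_pos_forall_le_of_tendsto_sInf
    ⟨0, Set.forall_mem_range.2 hL_nonneg⟩ hlim (half_lt_self hc)
  have hL_large : ∀ᶠ n in atTop, c / 4 < ∫ θ, L θ ∂(μ n) :=
    eventually_lt_integral_of_le_on_superlevel hf_meas hf_int hf_le hconv hL_int hL_nonneg hδ
      (fun θ hθ => hLδ θ hθ.le) (by linarith)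
  exact ⟨hL_large.mono fun n hn => (by positivity : (0 : ℝ) < c / 4).trans hn,
    tendsto_integral_mul_div_integral hf_int hf_le hconv hL_int hL_nonneg hLC (by positivity)
      (hL_large.mono fun n hn => hn.le)⟩
end

section
/- Let Θ be the standard simplex in ℝ^k, let M be a nonempty set of Borel probability measures on Θ, let f : Θ → ℝ be a continuous function with maximum value f_max on Θ, and let L : Θ → ℝ be a nonnegative bounded measurable function (the likelihood) such that L is strictly positive at every point θ where f(θ) = f_max and L is continuous on some neighborhood (relative to Θ) of each such point. If the prior upper expectation of f is vacuous, i.e. sup_{μ∈M} ∫_Θ f dμ = f_max, then the posterior upper expectation of f is also vacuous: sup{ (∫_Θ f·L dμ)/(∫_Θ L dμ) : μ ∈ M, ∫_Θ L dμ > 0 } = f_max. -/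
/-!
Let `K = {f = fmax}`. Since `L` is positive and continuous at every point of the compact set `K`,
there are an open `W ⊇ K` and `c > 0` with `L ≥ c` on `W`, and `η > 0` with `f ≤ fmax - η` on
the compact set `Wᶜ`. For a prior `μ` with `fmax - ∫ f dμ = δ`, Markov's inequality gives
`μ Wᶜ ≤ δ / η`, hence `∫ L dμ ≥ c (1 - δ / η)`, while
`fmax ∫ L dμ - ∫ f L dμ = ∫ (fmax - f) L dμ ≤ C δ`. So once `δ ≤ η / 2` the posterior mean is
within `2 C δ / c` of `fmax`, and vacuity of the prior makes `δ` arbitrarily small.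
-/

open MeasureTheory Filter Topology Set

theorem exists_pos_le_or_le_sub_of_continuousAt {X : Type*} [TopologicalSpace X] [CompactSpace X]
    {f L : X → ℝ} {a : ℝ} (hf : Continuous f)
    (hL : ∀ x, a ≤ f x → 0 < L x ∧ ContinuousAt L x) :
    ∃ c > 0, ∃ η > 0, ∀ x, c ≤ L x ∨ η ≤ a - f x := by
  obtain ⟨c, hc, hcL⟩ := (isClosed_le continuous_const hf).isCompact.exists_forall_le'
    (fun x hx => (hL x hx).2.continuousWithinAt) fun x hx => (hL x hx).1
  have hLK : ∀ᶠ x in 𝓝ˢ {x | a ≤ f x}, c / 2 < L x :=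
    eventually_nhdsSet_iff_forall.2 fun x hx =>
      (hL x hx).2.eventually (lt_mem_nhds (by linarith [hcL x hx]))
  obtain ⟨W, hWo, hKW, hWL⟩ := mem_nhdsSet_iff_exists.1 hLK
  obtain ⟨η, hη, hηf⟩ := hWo.isClosed_compl.isCompact.exists_forall_le'
    (continuous_const.sub hf).continuousOn fun x hx => sub_pos.2 (not_le.1 fun h => hx (hKW h))
  refine ⟨c / 2, half_pos hc, η, hη, fun x => ?_⟩
  by_cases hx : x ∈ W
  · exact Or.inl (hWL hx).le
  · exact Or.inr (hηf x hx)

section Posterior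

variable {X : Type*} [MeasurableSpace X] {μ : Measure X} [IsProbabilityMeasure μ]

theorem one_le_integral_div_add_integral_div {u v : X → ℝ} {c η : ℝ} (hc : 0 < c) (hη : 0 < η)
    (hu : Integrable u μ) (hv : Integrable v μ) (hu0 : 0 ≤ u) (hv0 : 0 ≤ v)
    (h : ∀ x, c ≤ u x ∨ η ≤ v x) :
    1 ≤ (∫ x, u x ∂μ) / c + (∫ x, v x ∂μ) / η := by
  have hcover : {x | c ≤ u x} ∪ {x | η ≤ v x} = univ := eq_univ_of_forall h
  calc 1 = μ.real ({x | c ≤ u x} ∪ {x | η ≤ v x}) := by rw [hcover, probReal_univ]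
    _ ≤ μ.real {x | c ≤ u x} + μ.real {x | η ≤ v x} := measureReal_union_le _ _
    _ ≤ _ := add_le_add
        ((le_div_iff₀' hc).2 (mul_meas_ge_le_integral_of_nonneg (ae_of_all _ hu0) hu c))
        ((le_div_iff₀' hη).2 (mul_meas_ge_le_integral_of_nonneg (ae_of_all _ hv0) hv η))

variable {f L : X → ℝ} {a C : ℝ}

theorem integral_const_sub_of_isProbabilityMeasure (hf : Integrable f μ) :
    ∫ x, (a - f x) ∂μ = a - ∫ x, f x ∂μ := by
  rw [integral_sub (integrable_const a) hf, integral_const, probReal_univ, one_smul]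

theorem mul_integral_sub_integral_mul_mem_Icc (hf : Integrable f μ) (hL : AEStronglyMeasurable L μ)
    (hfa : ∀ x, f x ≤ a) (hL0 : ∀ x, 0 ≤ L x) (hLC : ∀ x, L x ≤ C) :
    a * ∫ x, L x ∂μ - ∫ x, f x * L x ∂μ ∈ Icc 0 (C * (a - ∫ x, f x ∂μ)) := by
  have hLbound : ∀ᵐ x ∂μ, ‖L x‖ ≤ C :=
    ae_of_all _ fun x => (Real.norm_of_nonneg (hL0 x)).trans_le (hLC x)
  have hLi : Integrable L μ := .of_bound hL C hLbound
  have hgap : Integrable (fun x => a - f x) μ := (integrable_const a).sub hf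
  have hsplit : ∫ x, (a - f x) * L x ∂μ = a * ∫ x, L x ∂μ - ∫ x, f x * L x ∂μ := by
    simp_rw [sub_mul]
    rw [integral_sub (hLi.const_mul a) (hf.mul_bdd hL hLbound), integral_const_mul]
  rw [← hsplit, ← integral_const_sub_of_isProbabilityMeasure hf, ← integral_const_mul]
  exact ⟨integral_nonneg fun x => mul_nonneg (sub_nonneg.2 (hfa x)) (hL0 x),
    integral_mono (hgap.mul_bdd hL hLbound) (hgap.const_mul C) fun x => by
      rw [mul_comm C]
      exact mul_le_mul_of_nonneg_left (hLC x) (sub_nonneg.2 (hfa x))⟩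

theorem half_le_integral_and_sub_posterior_le {c η : ℝ} (hc : 0 < c) (hη : 0 < η)
    (hf : Integrable f μ) (hL : AEStronglyMeasurable L μ)
    (hfa : ∀ x, f x ≤ a) (hL0 : ∀ x, 0 ≤ L x) (hLC : ∀ x, L x ≤ C)
    (hsep : ∀ x, c ≤ L x ∨ η ≤ a - f x) (hprior : a - ∫ x, f x ∂μ ≤ η / 2) :
    c / 2 ≤ ∫ x, L x ∂μ ∧
      a - (∫ x, f x * L x ∂μ) / (∫ x, L x ∂μ) ≤ 2 * C * (a - ∫ x, f x ∂μ) / c := by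
  obtain ⟨hgap0, hgapC⟩ := mul_integral_sub_integral_mul_mem_Icc hf hL hfa hL0 hLC
  have hcover := one_le_integral_div_add_integral_div (μ := μ) (v := fun x => a - f x) hc hη
    (.of_bound hL C (ae_of_all _ fun x => (Real.norm_of_nonneg (hL0 x)).trans_le (hLC x)))
    ((integrable_const a).sub hf) hL0 (fun x => sub_nonneg.2 (hfa x)) hsep
  rw [integral_const_sub_of_isProbabilityMeasure hf] at hcover
  have hLc : c / 2 ≤ ∫ x, L x ∂μ := by
    have hprior_div : (a - ∫ x, f x ∂μ) / η ≤ 1 / 2 := by rw [div_le_iff₀ hη]; linarith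
    have hL_div : 1 / 2 ≤ (∫ x, L x ∂μ) / c := by linarith
    rw [le_div_iff₀ hc] at hL_div
    linarith
  refine ⟨hLc, ?_⟩
  have hLpos : 0 < ∫ x, L x ∂μ := (half_pos hc).trans_le hLc
  calc a - (∫ x, f x * L x ∂μ) / (∫ x, L x ∂μ)
      = (a * ∫ x, L x ∂μ - ∫ x, f x * L x ∂μ) / (∫ x, L x ∂μ) := by field_simp
    _ ≤ (a * ∫ x, L x ∂μ - ∫ x, f x * L x ∂μ) / (c / 2) :=
        div_le_div_of_nonneg_left hgap0 (half_pos hc) hLc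
    _ ≤ C * (a - ∫ x, f x ∂μ) / (c / 2) := by gcongr
    _ = 2 * C * (a - ∫ x, f x ∂μ) / c := by field_simp

end Posterior

theorem exists_pos_forall_sub_lt_posterior {X : Type*} [MeasurableSpace X] {f L : X → ℝ}
    {a c η C : ℝ} (hc : 0 < c) (hη : 0 < η) (hC : 0 ≤ C) (hfa : ∀ x, f x ≤ a)
    (hL0 : ∀ x, 0 ≤ L x) (hLC : ∀ x, L x ≤ C) (hLm : Measurable L)
    (hsep : ∀ x, c ≤ L x ∨ η ≤ a - f x) {ε : ℝ} (hε : 0 < ε) :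
    ∃ δ > 0, ∀ μ : Measure X, IsProbabilityMeasure μ → Integrable f μ →
      a - δ < ∫ x, f x ∂μ →
      0 < ∫ x, L x ∂μ ∧ a - ε < (∫ x, f x * L x ∂μ) / (∫ x, L x ∂μ) := by
  obtain ⟨δ, hδ, hδε⟩ := exists_pos_mul_lt hε (2 * C / c)
  refine ⟨min δ (η / 2), by positivity, fun μ _ hf hprior => ?_⟩
  obtain ⟨hLc, hpost⟩ := half_le_integral_and_sub_posterior_le hc hη hf hLm.aestronglyMeasurable
    hfa hL0 hLC hsep (by linarith [min_le_right δ (η / 2)])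
  refine ⟨(half_pos hc).trans_le hLc, ?_⟩
  have hgap : a - ∫ x, f x ∂μ ≤ δ := by linarith [min_le_left δ (η / 2)]
  have : a - (∫ x, f x * L x ∂μ) / (∫ x, L x ∂μ) < ε :=
    calc _ ≤ 2 * C * (a - ∫ x, f x ∂μ) / c := hpost
      _ = 2 * C / c * (a - ∫ x, f x ∂μ) := by ring
      _ ≤ 2 * C / c * δ := by gcongr
      _ < ε := hδε
  linarith

theorem vacuous_posterior_upper_expectation_general
    (k : ℕ)
    (M : Set (Measure (stdSimplex ℝ (Fin k))))
    (hM : M.Nonempty)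
    (hMprob : ∀ μ ∈ M, IsProbabilityMeasure μ)
    (f : stdSimplex ℝ (Fin k) → ℝ)
    (hf_cont : Continuous f)
    (fmax : ℝ)
    (hmax_le : ∀ θ, f θ ≤ fmax)
    (L : stdSimplex ℝ (Fin k) → ℝ)
    (hL_nonneg : ∀ θ, 0 ≤ L θ)
    (hL_bdd : ∃ C, ∀ θ, L θ ≤ C)
    (hL_meas : Measurable L)
    (hL_max : ∀ θ, f θ = fmax → 0 < L θ ∧ ∃ U ∈ 𝓝 θ, ContinuousOn L U)
    (hprior : sSup {r | ∃ μ ∈ M, r = ∫ θ, f θ ∂μ} = fmax) :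
    sSup {r | ∃ μ ∈ M, 0 < ∫ θ, L θ ∂μ ∧
        r = (∫ θ, f θ * L θ ∂μ) / (∫ θ, L θ ∂μ)} = fmax := by
  obtain ⟨C, hC⟩ := hL_bdd
  have hLC θ : L θ ≤ |C| := (hC θ).trans (le_abs_self C)
  have hf_int : ∀ μ ∈ M, Integrable f μ := fun μ hμ =>
    have := hMprob μ hμ
    hf_cont.integrable_of_hasCompactSupport (HasCompactSupport.of_compactSpace f)
  obtain ⟨c, hc, η, hη, hsep⟩ := exists_pos_le_or_le_sub_of_continuousAt hf_cont fun θ hθ => by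
    obtain ⟨hLθ, U, hU, hLU⟩ := hL_max θ (le_antisymm (hmax_le θ) hθ)
    exact ⟨hLθ, hLU.continuousAt hU⟩
  set posterior := {r | ∃ μ ∈ M, 0 < ∫ θ, L θ ∂μ ∧
      r = (∫ θ, f θ * L θ ∂μ) / (∫ θ, L θ ∂μ)}
  have happrox : ∀ w < fmax, ∃ r ∈ posterior, w < r := by
    intro w hw
    obtain ⟨δ, hδ, hpost⟩ := exists_pos_forall_sub_lt_posterior hc hη (abs_nonneg C) hmax_le
      hL_nonneg hLC hL_meas hsep (sub_pos.2 hw)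
    have hprior_gt : fmax - δ < sSup {r | ∃ μ ∈ M, r = ∫ θ, f θ ∂μ} := by linarith
    obtain ⟨_, ⟨μ, hμM, rfl⟩, hμ⟩ :=
      exists_lt_of_lt_csSup (by exact ⟨_, hM.some, hM.some_mem, rfl⟩) hprior_gt
    obtain ⟨hLpos, hlt⟩ := hpost μ (hMprob μ hμM) (hf_int μ hμM) hμ
    exact ⟨_, ⟨μ, hμM, hLpos, rfl⟩, by linarith⟩
  obtain ⟨r, hr, -⟩ := happrox (fmax - 1) (sub_one_lt fmax)
  refine csSup_eq_of_forall_le_of_forall_lt_exists_gt ⟨r, hr⟩ ?_ happrox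
  rintro _ ⟨μ, hμM, hLpos, rfl⟩
  have := hMprob μ hμM
  rw [div_le_iff₀ hLpos]
  linarith [(mul_integral_sub_integral_mul_mem_Icc (hf_int μ hμM) hL_meas.aestronglyMeasurable
    hmax_le hL_nonneg hLC).1]

/-- **Theorem 1.**
Let `Θ` be the standard simplex in `ℝ^k`, `M` a nonempty set of Borel probability
measures on `Θ` (the near-ignorance prior), `f : Θ → ℝ` a continuous function with
maximum value `fmax` on `Θ`, and `L : Θ → ℝ` a nonnegative bounded measurable
likelihood that is strictly positive at every point where `f` attains `fmax` and
continuous on a neighborhood (relative to `Θ`) of each such point.  If the prior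
upper expectation of `f` is vacuous, `sup_{μ∈M} ∫ f dμ = fmax`, then the posterior
upper expectation of `f` is also vacuous:
`sup { (∫ f·L dμ)/(∫ L dμ) | μ ∈ M, ∫ L dμ > 0 } = fmax`. -/
theorem vacuous_posterior_upper_expectation
    (k : ℕ)
    (M : Set (Measure (stdSimplex ℝ (Fin k))))
    (hM : M.Nonempty)
    (hMprob : ∀ μ ∈ M, IsProbabilityMeasure μ)
    (f : stdSimplex ℝ (Fin k) → ℝ)
    (hf_cont : Continuous f)
    (fmax : ℝ)
    (hmax_le : ∀ θ, f θ ≤ fmax)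
    (hmax_att : ∃ θ, f θ = fmax)
    (L : stdSimplex ℝ (Fin k) → ℝ)
    (hL_nonneg : ∀ θ, 0 ≤ L θ)
    (hL_bdd : ∃ C, ∀ θ, L θ ≤ C)
    (hL_meas : Measurable L)
    (hL_max : ∀ θ, f θ = fmax → 0 < L θ ∧ ∃ U ∈ 𝓝 θ, ContinuousOn L U)
    (hprior : sSup {r | ∃ μ ∈ M, r = ∫ θ, f θ ∂μ} = fmax) :
    sSup {r | ∃ μ ∈ M, 0 < ∫ θ, L θ ∂μ ∧
        r = (∫ θ, f θ * L θ ∂μ) / (∫ θ, L θ ∂μ)} = fmax :=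
  vacuous_posterior_upper_expectation_general k M hM hMprob f hf_cont fmax hmax_le L hL_nonneg
    hL_bdd hL_meas hL_max hprior
end

section
/- Let Θ be the standard simplex in ℝ^k, let M be a nonempty set of Borel probability measures on Θ, let f : Θ → ℝ be a nonnegative continuous function with maximum value f_max, and for δ > 0 set Θ_δ = {θ ∈ Θ : f(θ) ≥ f_max − δ}. Let L : Θ → ℝ be a nonnegative bounded measurable function such that lim_{δ→0} inf_{θ∈Θ_δ} L(θ) = c > 0. If sup_{μ∈M} ∫_Θ f dμ = f_max, then sup{ (∫_Θ f·L dμ)/(∫_Θ L dμ) : μ ∈ M, ∫_Θ L dμ > 0 } = f_max. -/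
open MeasureTheory Filter Topology

/-! Since `f ≤ fmax`, no posterior mean exceeds `fmax`. Conversely, fix `δ > 0` with
`m = inf_{Θ_δ} L > 0` and a prior `μ` whose gap `ε = fmax - ∫ f dμ` is at most `δ / 2`.
Integrating the pointwise bounds `m (f - (fmax - δ)) ≤ δ L` and
`(fmax - f) L ≤ δ L + C (fmax - f)`, where `L ≤ C`, gives `∫ L ≥ m / 2` and
`∫ f L ≥ (fmax - δ) ∫ L - C ε`, so the posterior mean under `μ` is at least
`fmax - δ - 2 C ε / m`. Since `ε` can be made arbitrarily small, and then `δ` too, the posterior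
upper expectation is `fmax`. -/

theorem le_of_eventually_sub_mul_le {a b K : ℝ} (h : ∀ᶠ ε in 𝓝[>] 0, a - K * ε ≤ b) :
    a ≤ b :=
  le_of_tendsto (tendsto_nhdsWithin_of_tendsto_nhds <|
    (continuous_const.sub (continuous_const.mul continuous_id)).tendsto' 0 a (by simp)) h

section Posterior

variable {α : Type*} [MeasurableSpace α]

def priorMeans (M : Set (Measure α)) (f : α → ℝ) : Set ℝ :=
  {r | ∃ μ ∈ M, r = ∫ x, f x ∂μ}

def posteriorMeans (M : Set (Measure α)) (f L : α → ℝ) : Set ℝ :=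
  {r | ∃ μ ∈ M, 0 < ∫ x, L x ∂μ ∧ r = (∫ x, f x * L x ∂μ) / (∫ x, L x ∂μ)}

variable {μ : Measure α} {f L : α → ℝ} {fmax C δ m : ℝ}

theorem Measurable.integrable_of_bounds [IsFiniteMeasure μ] (hL : Measurable L)
    (hL0 : ∀ x, 0 ≤ L x) (hLC : ∀ x, L x ≤ C) : Integrable L μ :=
  .of_bound hL.aestronglyMeasurable C
    (ae_of_all _ fun x => (Real.norm_of_nonneg (hL0 x)).trans_le (hLC x))

theorem MeasureTheory.Integrable.mul_of_bounds (hf : Integrable f μ) (hL : Measurable L)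
    (hL0 : ∀ x, 0 ≤ L x) (hLC : ∀ x, L x ≤ C) : Integrable (fun x => f x * L x) μ :=
  hf.mul_bdd hL.aestronglyMeasurable
    (ae_of_all _ fun x => (Real.norm_of_nonneg (hL0 x)).trans_le (hLC x))

theorem integral_mul_le_mul_integral (hfL : Integrable (fun x => f x * L x) μ)
    (hL : Integrable L μ) (hfmax : ∀ x, f x ≤ fmax) (hL0 : ∀ x, 0 ≤ L x) :
    ∫ x, f x * L x ∂μ ≤ fmax * ∫ x, L x ∂μ :=
  (integral_mono hfL (hL.const_mul fmax) fun x =>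
    mul_le_mul_of_nonneg_right (hfmax x) (hL0 x)).trans_eq (integral_const_mul fmax _)

theorem mul_sub_sub_integral_le_mul_integral [IsProbabilityMeasure μ] (hf : Integrable f μ)
    (hL : Integrable L μ) (hfmax : ∀ x, f x ≤ fmax) (hL0 : ∀ x, 0 ≤ L x) (hm : 0 ≤ m)
    (hδ : 0 ≤ δ) (hmL : ∀ x, fmax - δ ≤ f x → m ≤ L x) :
    m * (δ - (fmax - ∫ x, f x ∂μ)) ≤ δ * ∫ x, L x ∂μ := by
  have hpt : ∀ x, m * f x + m * δ ≤ δ * L x + m * fmax := by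
    intro x
    by_cases hx : fmax - δ ≤ f x
    · nlinarith [mul_le_mul_of_nonneg_left (hfmax x) hm, mul_le_mul_of_nonneg_left (hmL x hx) hδ]
    · nlinarith [mul_nonneg hδ (hL0 x), mul_le_mul_of_nonneg_left (not_le.1 hx).le hm]
  have : ∫ x, (m * f x + m * δ) ∂μ ≤ ∫ x, (δ * L x + m * fmax) ∂μ :=
    integral_mono ((hf.const_mul m).add (integrable_const (m * δ)))
      ((hL.const_mul δ).add (integrable_const (m * fmax))) hpt
  rw [integral_add (hf.const_mul m) (integrable_const _),
    integral_add (hL.const_mul δ) (integrable_const _)] at this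
  simp only [integral_const_mul, integral_const, probReal_univ, one_smul] at this
  linarith

theorem sub_mul_integral_sub_le_integral_mul [IsProbabilityMeasure μ] (hf : Integrable f μ)
    (hL : Integrable L μ) (hfL : Integrable (fun x => f x * L x) μ) (hfmax : ∀ x, f x ≤ fmax)
    (hL0 : ∀ x, 0 ≤ L x) (hLC : ∀ x, L x ≤ C) (hδ : 0 ≤ δ) :
    (fmax - δ) * ∫ x, L x ∂μ - C * (fmax - ∫ x, f x ∂μ) ≤ ∫ x, f x * L x ∂μ := by
  have hpt : ∀ x, (fmax - δ) * L x + C * f x ≤ f x * L x + C * fmax := by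
    intro x
    by_cases hx : fmax - δ ≤ f x
    · nlinarith [mul_nonneg (sub_nonneg.2 hx) (hL0 x),
        mul_nonneg ((hL0 x).trans (hLC x)) (sub_nonneg.2 (hfmax x))]
    · nlinarith [mul_le_mul_of_nonneg_left (hLC x) (sub_nonneg.2 (hfmax x)), mul_nonneg hδ (hL0 x)]
  have : ∫ x, ((fmax - δ) * L x + C * f x) ∂μ ≤ ∫ x, (f x * L x + C * fmax) ∂μ :=
    integral_mono ((hL.const_mul (fmax - δ)).add (hf.const_mul C))
      (hfL.add (integrable_const (C * fmax))) hpt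
  rw [integral_add (hL.const_mul _) (hf.const_mul C), integral_add hfL (integrable_const _)] at this
  simp only [integral_const_mul, integral_const, probReal_univ, one_smul] at this
  linarith

theorem sub_le_div_integral_of_gap_le [IsProbabilityMeasure μ] (hf : Integrable f μ)
    (hL : Measurable L) (hfmax : ∀ x, f x ≤ fmax) (hL0 : ∀ x, 0 ≤ L x) (hLC : ∀ x, L x ≤ C)
    (hδ : 0 < δ) (hm : 0 < m) (hmL : ∀ x, fmax - δ ≤ f x → m ≤ L x)
    (hgap : fmax - ∫ x, f x ∂μ ≤ δ / 2) :
    0 < ∫ x, L x ∂μ ∧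
      fmax - δ - 2 * C / m * (fmax - ∫ x, f x ∂μ) ≤
        (∫ x, f x * L x ∂μ) / (∫ x, L x ∂μ) := by
  have hLi : Integrable L μ := hL.integrable_of_bounds hL0 hLC
  have hgap0 : 0 ≤ fmax - ∫ x, f x ∂μ := by
    have := integral_mono hf (integrable_const fmax) hfmax
    simp only [integral_const, probReal_univ, one_smul] at this
    linarith
  obtain ⟨x₀⟩ := nonempty_of_isProbabilityMeasure μ
  have hC : 0 ≤ C := (hL0 x₀).trans (hLC x₀)
  have hLm : m / 2 ≤ ∫ x, L x ∂μ := by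
    have := mul_sub_sub_integral_le_mul_integral hf hLi hfmax hL0 hm.le hδ.le hmL
    nlinarith
  have hLpos : 0 < ∫ x, L x ∂μ := by linarith
  refine ⟨hLpos, (le_div_iff₀ hLpos).2 ?_⟩
  have hnum := sub_mul_integral_sub_le_integral_mul hf hLi (hf.mul_of_bounds hL hL0 hLC) hfmax
    hL0 hLC hδ.le
  have : C * (fmax - ∫ x, f x ∂μ) ≤ 2 * C / m * (fmax - ∫ x, f x ∂μ) * ∫ x, L x ∂μ :=
    calc C * (fmax - ∫ x, f x ∂μ) = 2 * C / m * (fmax - ∫ x, f x ∂μ) * (m / 2) := by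
          field_simp
      _ ≤ _ := mul_le_mul_of_nonneg_left hLm (by positivity)
  linarith

variable {M : Set (Measure α)}

theorem posteriorMeans_le (hMfin : ∀ μ ∈ M, IsFiniteMeasure μ) (hf : ∀ μ ∈ M, Integrable f μ)
    (hL : Measurable L) (hfmax : ∀ x, f x ≤ fmax) (hL0 : ∀ x, 0 ≤ L x) (hLC : ∀ x, L x ≤ C) :
    ∀ r ∈ posteriorMeans M f L, r ≤ fmax := by
  rintro r ⟨μ, hμ, hpos, rfl⟩
  have := hMfin μ hμ
  exact (div_le_iff₀ hpos).2 <| integral_mul_le_mul_integral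
    ((hf μ hμ).mul_of_bounds hL hL0 hLC) (hL.integrable_of_bounds hL0 hLC) hfmax hL0

theorem sub_le_sSup_posteriorMeans (hM : M.Nonempty)
    (hMprob : ∀ μ ∈ M, IsProbabilityMeasure μ) (hf : ∀ μ ∈ M, Integrable f μ)
    (hL : Measurable L) (hfmax : ∀ x, f x ≤ fmax) (hL0 : ∀ x, 0 ≤ L x) (hLC : ∀ x, L x ≤ C)
    (hprior : sSup (priorMeans M f) = fmax) (hδ : 0 < δ)
    (hm : 0 < sInf (L '' {x | fmax - δ ≤ f x})) :
    fmax - δ ≤ sSup (posteriorMeans M f L) := by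
  set m := sInf (L '' {x | fmax - δ ≤ f x})
  have hmL : ∀ x, fmax - δ ≤ f x → m ≤ L x := fun x hx =>
    csInf_le ⟨0, by rintro _ ⟨y, -, rfl⟩; exact hL0 y⟩ ⟨x, hx, rfl⟩
  have hbdd : BddAbove (posteriorMeans M f L) :=
    ⟨fmax, posteriorMeans_le (fun μ hμ => have := hMprob μ hμ; inferInstance) hf hL hfmax hL0 hLC⟩
  obtain ⟨μ₀, hμ₀⟩ := hM
  refine le_of_eventually_sub_mul_le (K := 2 * C / m) ?_
  filter_upwards [eventually_nhdsWithin_of_eventually_nhds (eventually_le_nhds (half_pos hδ)),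
    self_mem_nhdsWithin] with ε hεδ hε
  obtain ⟨_, ⟨μ, hμ, rfl⟩, hμε⟩ : ∃ r ∈ priorMeans M f, fmax - ε < r :=
    exists_lt_of_lt_csSup ⟨_, μ₀, hμ₀, rfl⟩ (hprior ▸ sub_lt_self fmax hε)
  have := hMprob μ hμ
  obtain ⟨x₀⟩ := nonempty_of_isProbabilityMeasure μ
  have hC : 0 ≤ C := (hL0 x₀).trans (hLC x₀)
  obtain ⟨hpos, hle⟩ :=
    sub_le_div_integral_of_gap_le (hf μ hμ) hL hfmax hL0 hLC hδ hm hmL (by linarith)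
  calc fmax - δ - 2 * C / m * ε ≤ fmax - δ - 2 * C / m * (fmax - ∫ x, f x ∂μ) := by
        gcongr; linarith
    _ ≤ _ := hle
    _ ≤ _ := le_csSup hbdd ⟨μ, hμ, hpos, rfl⟩

end Posterior

/-- **Theorem 1 (version with the weaker likelihood assumption of the footnote).**
Let `Θ` be the standard simplex in `ℝ^k`, `M` a nonempty set of Borel probability
measures on `Θ`, `f : Θ → ℝ` a nonnegative continuous function with maximum value
`fmax`, and for `δ > 0` let `Θ_δ = {θ ∈ Θ | f θ ≥ fmax - δ}`.  Let `L : Θ → ℝ` be a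
nonnegative bounded measurable likelihood with `lim_{δ→0⁺} inf_{θ∈Θ_δ} L θ = c > 0`.
If `sup_{μ∈M} ∫ f dμ = fmax`, then
`sup { (∫ f·L dμ)/(∫ L dμ) | μ ∈ M, ∫ L dμ > 0 } = fmax`. -/
theorem vacuous_posterior_upper_expectation_of_liminf
    (k : ℕ)
    (M : Set (Measure (stdSimplex ℝ (Fin k))))
    (hM : M.Nonempty)
    (hMprob : ∀ μ ∈ M, IsProbabilityMeasure μ)
    (f : stdSimplex ℝ (Fin k) → ℝ)
    (hf_nonneg : ∀ θ, 0 ≤ f θ)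
    (hf_cont : Continuous f)
    (fmax : ℝ)
    (hmax_le : ∀ θ, f θ ≤ fmax)
    (hmax_att : ∃ θ, f θ = fmax)
    (L : stdSimplex ℝ (Fin k) → ℝ)
    (hL_nonneg : ∀ θ, 0 ≤ L θ)
    (hL_bdd : ∃ C, ∀ θ, L θ ≤ C)
    (hL_meas : Measurable L)
    (c : ℝ) (hc : 0 < c)
    (hlim : Tendsto (fun δ => sInf (L '' {θ | fmax - δ ≤ f θ})) (𝓝[>] (0 : ℝ)) (𝓝 c))
    (hprior : sSup {r | ∃ μ ∈ M, r = ∫ θ, f θ ∂μ} = fmax) :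
    sSup {r | ∃ μ ∈ M, 0 < ∫ θ, L θ ∂μ ∧
        r = (∫ θ, f θ * L θ ∂μ) / (∫ θ, L θ ∂μ)} = fmax := by
  obtain ⟨θ₀, hθ₀⟩ := hmax_att
  obtain ⟨C, hC⟩ := hL_bdd
  show sSup (posteriorMeans M f L) = fmax
  have hf : ∀ μ ∈ M, Integrable f μ := fun μ hμ =>
    have := hMprob μ hμ
    hf_cont.measurable.integrable_of_bounds hf_nonneg hmax_le
  have hle : ∀ r ∈ posteriorMeans M f L, r ≤ fmax :=
    posteriorMeans_le (fun μ hμ => have := hMprob μ hμ; inferInstance) hf hL_meas hmax_le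
      hL_nonneg hC
  refine le_antisymm (Real.sSup_le hle (hθ₀ ▸ hf_nonneg θ₀)) ?_
  refine le_of_eventually_sub_mul_le (K := 1) ?_
  filter_upwards [hlim.eventually (lt_mem_nhds hc), self_mem_nhdsWithin] with δ hm hδ
  simpa only [one_mul] using
    sub_le_sSup_posteriorMeans hM hMprob hf hL_meas hmax_le hL_nonneg hC hprior hδ hm
end

section
/- Let Θ be the standard simplex in ℝ^k, let n'₁, …, n'_k be nonnegative integers with N' = Σ_i n'_i > 0 and let g(θ) = ∏_{i=1}^k θ_i^{n'_i}. Let M be a nonempty set of Borel probability measures on Θ and let L : Θ → ℝ be a nonnegative bounded measurable likelihood that is continuous on Θ and satisfies L(θ) > 0 for every θ ∈ Θ having θ_i = 0 for at least one index i with n'_i > 0 (i.e. L is positive on the zero set of g). If the prior lower predictive probability is vacuous, i.e. inf_{μ∈M} ∫_Θ g dμ = 0, then the posterior lower predictive probability is vacuous too: inf{ (∫_Θ g·L dμ)/(∫_Θ L dμ) : μ ∈ M, ∫_Θ L dμ > 0 } = 0. -/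
open MeasureTheory Set

/-!
`L` is positive where `g` vanishes, so the continuous function `L + g` is bounded below by some
`c > 0` on the compact simplex. For a prior `μ` with `∫ g dμ ≤ c / 2` this forces
`∫ L dμ ≥ c / 2`, while `∫ g L dμ ≤ (max L) ∫ g dμ`; so the posterior expectation of `g` is
at most `(2 max L / c) ∫ g dμ`, and priors with `∫ g dμ` arbitrarily small exist by assumption.
-/

section ProbabilityMeasure

variable {X : Type*} [MeasurableSpace X] {μ : Measure X} {g L : X → ℝ} {c C : ℝ}

theorem sub_integral_le_integral_of_le_add [IsProbabilityMeasure μ]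
    (hcLg : ∀ x, c ≤ L x + g x) (hg : Integrable g μ) (hL : Integrable L μ) :
    c - ∫ x, g x ∂μ ≤ ∫ x, L x ∂μ := by
  have h : ∫ _, c ∂μ ≤ ∫ x, L x + g x ∂μ :=
    integral_mono (integrable_const c) (hL.add hg) hcLg
  rw [integral_const, probReal_univ, one_smul, integral_add hL hg] at h
  linarith

theorem integral_mul_le_mul_integral_s7 (hg0 : ∀ x, 0 ≤ g x) (hLC : ∀ x, L x ≤ C)
    (hg : Integrable g μ) (hgL : Integrable (fun x ↦ g x * L x) μ) :
    ∫ x, g x * L x ∂μ ≤ C * ∫ x, g x ∂μ := by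
  rw [← integral_const_mul]
  refine integral_mono hgL (hg.const_mul C) fun x ↦ ?_
  simpa only [mul_comm C] using mul_le_mul_of_nonneg_left (hLC x) (hg0 x)

theorem integral_mul_div_integral_le [IsProbabilityMeasure μ] (hc : 0 < c) (hC : 0 ≤ C)
    (hg0 : ∀ x, 0 ≤ g x) (hLC : ∀ x, L x ≤ C) (hcLg : ∀ x, c ≤ L x + g x) (hg : Integrable g μ)
    (hL : Integrable L μ) (hgL : Integrable (fun x ↦ g x * L x) μ)
    (hsmall : ∫ x, g x ∂μ ≤ c / 2) :
    0 < ∫ x, L x ∂μ ∧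
      (∫ x, g x * L x ∂μ) / ∫ x, L x ∂μ ≤ 2 * C / c * ∫ x, g x ∂μ := by
  have hL_ge : c / 2 ≤ ∫ x, L x ∂μ := by
    linarith [sub_integral_le_integral_of_le_add hcLg hg hL]
  refine ⟨by linarith, ?_⟩
  calc (∫ x, g x * L x ∂μ) / ∫ x, L x ∂μ
      ≤ C * (∫ x, g x ∂μ) / (c / 2) :=
        div_le_div₀ (mul_nonneg hC (integral_nonneg hg0))
          (integral_mul_le_mul_integral_s7 hg0 hLC hg hgL) (half_pos hc) hL_ge
    _ = 2 * C / c * ∫ x, g x ∂μ := by field_simp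

end ProbabilityMeasure

section CompactSpace

variable {X : Type*} [TopologicalSpace X] [CompactSpace X]

theorem exists_pos_le_add_of_pos_of_eq_zero {g L : X → ℝ} (hg : Continuous g)
    (hg0 : ∀ x, 0 ≤ g x) (hL : Continuous L) (hL0 : ∀ x, 0 ≤ L x)
    (hpos : ∀ x, g x = 0 → 0 < L x) : ∃ c, 0 < c ∧ ∀ x, c ≤ L x + g x := by
  obtain ⟨c, hc, hcLg⟩ := isCompact_univ.exists_forall_le' (hL.add hg).continuousOn
    (a := 0) fun x _ ↦ by
      rw [Pi.add_apply]
      rcases (hg0 x).eq_or_lt with hgx | hgx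
      · linarith [hpos x hgx.symm]
      · linarith [hL0 x]
  exact ⟨c, hc, fun x ↦ hcLg x (mem_univ x)⟩

variable [MeasurableSpace X] [OpensMeasurableSpace X]

theorem Continuous.integrable_of_compactSpace {f : X → ℝ} (hf : Continuous f) (μ : Measure X)
    [IsFiniteMeasure μ] : Integrable f μ :=
  hf.integrable_of_hasCompactSupport (HasCompactSupport.of_compactSpace f)

theorem exists_pos_forall_integral_lt_imp_integral_mul_div_integral_lt [Nonempty X]
    {g L : X → ℝ} (hg : Continuous g) (hg0 : ∀ x, 0 ≤ g x) (hL : Continuous L)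
    (hL0 : ∀ x, 0 ≤ L x) (hpos : ∀ x, g x = 0 → 0 < L x) {ε : ℝ} (hε : 0 < ε) :
    ∃ δ > 0, ∀ (μ : Measure X) [IsProbabilityMeasure μ], ∫ x, g x ∂μ < δ →
      0 < ∫ x, L x ∂μ ∧ (∫ x, g x * L x ∂μ) / ∫ x, L x ∂μ < ε := by
  obtain ⟨c, hc, hcLg⟩ := exists_pos_le_add_of_pos_of_eq_zero hg hg0 hL hL0 hpos
  obtain ⟨x₀, -, hx₀⟩ := isCompact_univ.exists_isMaxOn univ_nonempty hL.continuousOn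
  set K := 2 * L x₀ / c
  have hK : 0 ≤ K := by have := hL0 x₀; positivity
  refine ⟨min (c / 2) (ε / (K + 1)), by positivity, fun μ _ hμg ↦ ?_⟩
  obtain ⟨hLμ, hratio⟩ := integral_mul_div_integral_le hc (hL0 x₀) hg0
    (fun x ↦ hx₀ (mem_univ x)) hcLg (hg.integrable_of_compactSpace μ)
    (hL.integrable_of_compactSpace μ) ((hg.mul hL).integrable_of_compactSpace μ)
    (hμg.le.trans (min_le_left _ _))
  refine ⟨hLμ, hratio.trans_lt ?_⟩
  calc K * ∫ x, g x ∂μ ≤ (K + 1) * ∫ x, g x ∂μ := by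
        nlinarith [integral_nonneg (μ := μ) (f := g) hg0]
    _ < (K + 1) * (ε / (K + 1)) := by gcongr; exact hμg.trans_le (min_le_right _ _)
    _ = ε := mul_div_cancel₀ _ (by positivity)

theorem sInf_integral_mul_div_integral_eq_zero {M : Set (Measure X)} (hM : M.Nonempty)
    (hMprob : ∀ μ ∈ M, IsProbabilityMeasure μ) {g L : X → ℝ} (hg : Continuous g)
    (hg0 : ∀ x, 0 ≤ g x) (hL : Continuous L) (hL0 : ∀ x, 0 ≤ L x)
    (hpos : ∀ x, g x = 0 → 0 < L x) (hprior : sInf {r | ∃ μ ∈ M, r = ∫ x, g x ∂μ} = 0) :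
    sInf {r | ∃ μ ∈ M, 0 < ∫ x, L x ∂μ ∧
      r = (∫ x, g x * L x ∂μ) / ∫ x, L x ∂μ} = 0 := by
  obtain ⟨μ₀, hμ₀⟩ := hM
  have := hMprob μ₀ hμ₀
  have : Nonempty X := nonempty_of_isProbabilityMeasure μ₀
  have key : ∀ ε > 0, ∃ r ∈ {r | ∃ μ ∈ M, 0 < ∫ x, L x ∂μ ∧
      r = (∫ x, g x * L x ∂μ) / ∫ x, L x ∂μ}, r < ε := by
    intro ε hε
    obtain ⟨δ, hδ, hsmall⟩ :=
      exists_pos_forall_integral_lt_imp_integral_mul_div_integral_lt hg hg0 hL hL0 hpos hε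
    obtain ⟨_, ⟨μ, hμ, rfl⟩, hμg⟩ := exists_lt_of_csInf_lt
      (s := {r | ∃ μ ∈ M, r = ∫ x, g x ∂μ}) ⟨_, μ₀, hμ₀, rfl⟩ (hprior ▸ hδ)
    have := hMprob μ hμ
    obtain ⟨hLμ, hratio⟩ := hsmall μ hμg
    exact ⟨_, ⟨μ, hμ, hLμ, rfl⟩, hratio⟩
  obtain ⟨r, hr, -⟩ := key 1 one_pos
  refine csInf_eq_of_forall_ge_of_forall_gt_exists_lt ⟨r, hr⟩ ?_ key
  rintro _ ⟨μ, -, hLμ, rfl⟩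
  exact div_nonneg (integral_nonneg fun x ↦ mul_nonneg (hg0 x) (hL0 x)) hLμ.le

end CompactSpace

theorem vacuous_posterior_lower_predictive_general
    (k : ℕ) (n' : Fin k → ℕ)
    (M : Set (Measure (stdSimplex ℝ (Fin k))))
    (hM : M.Nonempty)
    (hMprob : ∀ μ ∈ M, IsProbabilityMeasure μ)
    (L : stdSimplex ℝ (Fin k) → ℝ)
    (hL_nonneg : ∀ θ, 0 ≤ L θ)
    (hL_cont : Continuous L)
    (hL_pos : ∀ θ : stdSimplex ℝ (Fin k),
        (∃ i, 0 < n' i ∧ (θ : Fin k → ℝ) i = 0) → 0 < L θ)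
    (hprior : sInf {r | ∃ μ ∈ M, r = ∫ θ, ∏ i, (θ : Fin k → ℝ) i ^ n' i ∂μ} = 0) :
    sInf {r | ∃ μ ∈ M, 0 < ∫ θ, L θ ∂μ ∧
        r = (∫ θ, (∏ i, (θ : Fin k → ℝ) i ^ n' i) * L θ ∂μ) / (∫ θ, L θ ∂μ)} = 0 := by
  refine sInf_integral_mul_div_integral_eq_zero hM hMprob
    (continuous_finsetProd _ fun i _ ↦ ((continuous_apply i).comp continuous_subtype_val).pow _)
    (fun θ ↦ Finset.prod_nonneg fun i _ ↦ pow_nonneg (θ.2.1 i) _) hL_cont hL_nonneg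
    (fun θ hθ ↦ hL_pos θ ?_) hprior
  obtain ⟨i, -, hi⟩ := Finset.prod_eq_zero_iff.mp hθ
  obtain ⟨hθi, hni⟩ := pow_eq_zero_iff'.mp hi
  exact ⟨i, Nat.pos_of_ne_zero hni, hθi⟩

/-- **Corollary 2.**
Let `Θ` be the standard simplex in `ℝ^k`, `n'₁, …, n'_k` nonnegative integers with
`N' = Σᵢ n'ᵢ > 0`, and `g θ = ∏ᵢ θᵢ ^ n'ᵢ`.  Let `M` be a nonempty set of Borel
probability measures on `Θ` and `L : Θ → ℝ` a nonnegative bounded measurable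
likelihood, continuous on `Θ`, with `L θ > 0` for every `θ ∈ Θ` having `θᵢ = 0` for
at least one `i` with `n'ᵢ > 0` (i.e. positive on the zero set of `g`).  If the
prior lower predictive probability is vacuous, `inf_{μ∈M} ∫ g dμ = 0`, then so is
the posterior one: `inf { (∫ g·L dμ)/(∫ L dμ) | μ ∈ M, ∫ L dμ > 0 } = 0`. -/
theorem vacuous_posterior_lower_predictive
    (k : ℕ) (n' : Fin k → ℕ) (hN' : 0 < ∑ i, n' i)
    (M : Set (Measure (stdSimplex ℝ (Fin k))))
    (hM : M.Nonempty)
    (hMprob : ∀ μ ∈ M, IsProbabilityMeasure μ)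
    (L : stdSimplex ℝ (Fin k) → ℝ)
    (hL_nonneg : ∀ θ, 0 ≤ L θ)
    (hL_bdd : ∃ C, ∀ θ, L θ ≤ C)
    (hL_meas : Measurable L)
    (hL_cont : Continuous L)
    (hL_pos : ∀ θ : stdSimplex ℝ (Fin k),
        (∃ i, 0 < n' i ∧ (θ : Fin k → ℝ) i = 0) → 0 < L θ)
    (hprior : sInf {r | ∃ μ ∈ M, r = ∫ θ, ∏ i, (θ : Fin k → ℝ) i ^ n' i ∂μ} = 0) :
    sInf {r | ∃ μ ∈ M, 0 < ∫ θ, L θ ∂μ ∧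
        r = (∫ θ, (∏ i, (θ : Fin k → ℝ) i ^ n' i) * L θ ∂μ) / (∫ θ, L θ ∂μ)} = 0 :=
  vacuous_posterior_lower_predictive_general k n' M hM hMprob L hL_nonneg hL_cont hL_pos hprior
end

section
/- Let Θ be the standard simplex in ℝ^k, fix an index i, and let e^i ∈ Θ be the vertex with i-th coordinate 1 and all other coordinates 0. Let M be a nonempty set of Borel probability measures on Θ with sup_{μ∈M} ∫_Θ θ_i dμ = 1, and let L : Θ → ℝ be a nonnegative bounded measurable likelihood with L(e^i) > 0 that is continuous on some neighborhood of e^i (relative to Θ). Then sup{ (∫_Θ θ_i·L dμ)/(∫_Θ L dμ) : μ ∈ M, ∫_Θ L dμ > 0 } = 1, and consequently, for every j ≠ i, inf{ (∫_Θ θ_j·L dμ)/(∫_Θ L dμ) : μ ∈ M, ∫_Θ L dμ > 0 } = 0. -/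
/-!
Near the vertex `e^i` the likelihood is at least `L(e^i) / 2`, and `dist θ e^i ≤ 1 - θᵢ`, so this
holds on `{1 - θᵢ ≤ δ}`. Priors whose mean of `θᵢ` is close to `1` put almost all their mass on
that set, hence keep the evidence `∫ L` above `L(e^i) / 4`, while
`∫ (1 - θᵢ) L ≤ δ ∫ L + (sup L / δ) ∫ (1 - θᵢ)` becomes an arbitrarily small fraction of it.
So posterior means of `θᵢ` approach `1`, and those of `θⱼ ≤ 1 - θᵢ` approach `0`.
-/

open MeasureTheory Filter Topology

namespace stdSimplex

variable {ι : Type*} [Fintype ι]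

lemma apply_le_one_sub (θ : stdSimplex ℝ ι) {i j : ι} (hji : j ≠ i) :
    θ j ≤ 1 - θ i := by
  classical
  have h := Finset.sum_le_sum_of_subset_of_nonneg (Finset.subset_univ {i, j})
    fun l _ _ => zero_le θ l
  rw [Finset.sum_pair hji.symm, sum_eq_one] at h
  linarith

lemma dist_le_one_sub (θ e : stdSimplex ℝ ι) {i : ι} (he : e i = 1) :
    dist θ e ≤ 1 - θ i := by
  rw [Subtype.dist_eq]
  refine (dist_pi_le_iff (sub_nonneg.2 (le_one θ i))).2 fun j => ?_
  change dist (θ j) (e j) ≤ _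
  rw [Real.dist_eq]
  by_cases hji : j = i
  · subst hji
    rw [he, abs_of_nonpos (sub_nonpos.2 (le_one θ j)), neg_sub]
  · have hej : e j = 0 :=
      le_antisymm (by simpa [he] using apply_le_one_sub e hji) (zero_le e j)
    rw [hej, sub_zero, abs_of_nonneg (zero_le θ j)]
    exact apply_le_one_sub θ hji

lemma exists_lt_of_one_sub_le_of_continuousAt {L : stdSimplex ℝ ι → ℝ}
    {e : stdSimplex ℝ ι} {i : ι} {c : ℝ} (hL : ContinuousAt L e) (he : e i = 1)
    (hc : c < L e) : ∃ δ > 0, ∀ θ : stdSimplex ℝ ι, 1 - θ i ≤ δ → c < L θ := by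
  obtain ⟨δ, hδ, hball⟩ :=
    Metric.eventually_nhds_iff.1 (hL.eventually (eventually_gt_nhds hc))
  exact ⟨δ / 2, half_pos hδ, fun θ hθ =>
    hball ((dist_le_one_sub θ e he).trans_lt (hθ.trans_lt (half_lt_self hδ)))⟩

end stdSimplex

section PosteriorMean

variable {Ω : Type*} [MeasurableSpace Ω] {μ : Measure Ω}

lemma integrable_of_nonneg_of_le [IsFiniteMeasure μ] {f : Ω → ℝ} {C : ℝ} (hf : Measurable f)
    (hf0 : ∀ x, 0 ≤ f x) (hfC : ∀ x, f x ≤ C) : Integrable f μ :=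
  .of_bound hf.aestronglyMeasurable C <| ae_of_all _ fun x => by
    rw [Real.norm_of_nonneg (hf0 x)]; exact hfC x

lemma integrable_mul_of_le_one [IsFiniteMeasure μ] {f L : Ω → ℝ} {C : ℝ} (hf : Measurable f)
    (hL : Measurable L) (hf0 : ∀ x, 0 ≤ f x) (hf1 : ∀ x, f x ≤ 1) (hL0 : ∀ x, 0 ≤ L x)
    (hLC : ∀ x, L x ≤ C) : Integrable (fun x => f x * L x) μ :=
  integrable_of_nonneg_of_le (hf.mul hL) (fun x => mul_nonneg (hf0 x) (hL0 x))
    fun x => (mul_le_of_le_one_left (hL0 x) (hf1 x)).trans (hLC x)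

lemma mul_one_sub_integral_div_le_integral [IsProbabilityMeasure μ] {g L : Ω → ℝ} {c δ : ℝ}
    (hg : Integrable g μ) (hL : Integrable L μ) (hg0 : ∀ x, 0 ≤ g x) (hL0 : ∀ x, 0 ≤ L x)
    (hc : 0 ≤ c) (hδ : 0 < δ) (hLc : ∀ x, g x ≤ δ → c ≤ L x) :
    c * (1 - (∫ x, g x ∂μ) / δ) ≤ ∫ x, L x ∂μ := by
  have hpt : ∀ x, c * (1 - g x / δ) ≤ L x := by
    intro x
    by_cases hx : g x ≤ δ
    · have : 0 ≤ g x / δ := div_nonneg (hg0 x) hδ.le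
      nlinarith [hLc x hx]
    · have : 1 < g x / δ := (one_lt_div hδ).2 (not_le.1 hx)
      nlinarith [hL0 x]
  calc c * (1 - (∫ x, g x ∂μ) / δ) = ∫ x, c * (1 - g x / δ) ∂μ := by
        rw [integral_const_mul, integral_sub (integrable_const 1) (hg.div_const δ),
          integral_div]
        simp
    _ ≤ ∫ x, L x ∂μ :=
        integral_mono (((integrable_const 1).sub (hg.div_const δ)).const_mul c) hL hpt

lemma integral_mul_le_mul_integral_add [IsFiniteMeasure μ] {g L : Ω → ℝ} {C δ : ℝ}
    (hg : Measurable g) (hL : Measurable L) (hg0 : ∀ x, 0 ≤ g x) (hg1 : ∀ x, g x ≤ 1)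
    (hL0 : ∀ x, 0 ≤ L x) (hLC : ∀ x, L x ≤ C) (hδ : 0 < δ) :
    ∫ x, g x * L x ∂μ ≤ δ * ∫ x, L x ∂μ + C / δ * ∫ x, g x ∂μ := by
  have hgi : Integrable g μ := integrable_of_nonneg_of_le hg hg0 hg1
  have hLi : Integrable L μ := integrable_of_nonneg_of_le hL hL0 hLC
  have hgLi : Integrable (fun x => g x * L x) μ :=
    integrable_mul_of_le_one hg hL hg0 hg1 hL0 hLC
  have hpt : ∀ x, g x * L x ≤ δ * L x + C / δ * g x := by
    intro x
    have hC : 0 ≤ C := (hL0 x).trans (hLC x)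
    by_cases hx : g x ≤ δ
    · have := mul_le_mul_of_nonneg_right hx (hL0 x)
      have : 0 ≤ C / δ * g x := mul_nonneg (div_nonneg hC hδ.le) (hg0 x)
      linarith
    · have h1 : 1 ≤ g x / δ := ((one_lt_div hδ).2 (not_le.1 hx)).le
      have : C ≤ C / δ * g x := by rw [div_mul_eq_mul_div, mul_div_assoc]; nlinarith
      nlinarith [hL0 x, hLC x, hg1 x, mul_nonneg hδ.le (hL0 x)]
  calc ∫ x, g x * L x ∂μ ≤ ∫ x, δ * L x + C / δ * g x ∂μ :=
        integral_mono hgLi ((hLi.const_mul δ).add (hgi.const_mul (C / δ))) hpt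
    _ = δ * ∫ x, L x ∂μ + C / δ * ∫ x, g x ∂μ := by
        rw [integral_add (hLi.const_mul δ) (hgi.const_mul (C / δ)), integral_const_mul,
          integral_const_mul]

lemma exists_mem_integral_mul_le_mul_integral (M : Set (Measure Ω))
    (hM : ∀ μ ∈ M, IsProbabilityMeasure μ) {g L : Ω → ℝ} {C c δ ε : ℝ}
    (hg : Measurable g) (hL : Measurable L) (hg0 : ∀ x, 0 ≤ g x) (hg1 : ∀ x, g x ≤ 1)
    (hL0 : ∀ x, 0 ≤ L x) (hLC : ∀ x, L x ≤ C) (hc : 0 < c) (hδ : 0 < δ)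
    (hLc : ∀ x, g x ≤ δ → c ≤ L x) (hsmall : ∀ η > 0, ∃ μ ∈ M, ∫ x, g x ∂μ < η)
    (hε : 0 < ε) : ∃ μ ∈ M, 0 < ∫ x, L x ∂μ ∧ ∫ x, g x * L x ∂μ ≤ ε * ∫ x, L x ∂μ := by
  set C' := max C 1
  have hC' : 0 < C' := lt_max_of_lt_right one_pos
  set δ₀ := min δ (ε / 2)
  have hδ₀ : 0 < δ₀ := lt_min hδ (half_pos hε)
  obtain ⟨μ, hμM, hμ⟩ := hsmall (min (δ₀ / 2) (ε * c * δ₀ / (4 * C'))) (by positivity)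
  have := hM μ hμM
  have hmass : c / 2 ≤ ∫ x, L x ∂μ := by
    have hlow := mul_one_sub_integral_div_le_integral (μ := μ)
      (integrable_of_nonneg_of_le hg hg0 hg1) (integrable_of_nonneg_of_le hL hL0 hLC)
      hg0 hL0 hc.le hδ₀ fun x hx => hLc x (hx.trans (min_le_left _ _))
    have : (∫ x, g x ∂μ) / δ₀ ≤ 1 / 2 := by
      rw [div_le_iff₀ hδ₀]; linarith [min_le_left (δ₀ / 2) (ε * c * δ₀ / (4 * C'))]
    nlinarith
  have htail : C' / δ₀ * ∫ x, g x ∂μ ≤ ε * c / 4 :=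
    calc C' / δ₀ * ∫ x, g x ∂μ ≤ C' / δ₀ * (ε * c * δ₀ / (4 * C')) :=
          mul_le_mul_of_nonneg_left (hμ.le.trans (min_le_right _ _)) (by positivity)
      _ = ε * c / 4 := by field_simp
  have hsplit := integral_mul_le_mul_integral_add (μ := μ) hg hL hg0 hg1 hL0
    (fun x => (hLC x).trans (le_max_left C 1)) hδ₀
  refine ⟨μ, hμM, by linarith, ?_⟩
  nlinarith [min_le_right δ (ε / 2)]

lemma exists_mem_integral_one_sub_lt (M : Set (Measure Ω))
    (hM : ∀ μ ∈ M, IsProbabilityMeasure μ) {f : Ω → ℝ} (hf : ∀ μ ∈ M, Integrable f μ)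
    (hsup : sSup {r | ∃ μ ∈ M, r = ∫ x, f x ∂μ} = 1) {η : ℝ} (hη : 0 < η) :
    ∃ μ ∈ M, ∫ x, 1 - f x ∂μ < η := by
  have hne : {r | ∃ μ ∈ M, r = ∫ x, f x ∂μ}.Nonempty :=
    Set.nonempty_iff_ne_empty.2 fun h => by simp [h] at hsup
  obtain ⟨_, ⟨μ, hμM, rfl⟩, hlt⟩ := exists_lt_of_lt_csSup hne (hsup ▸ sub_lt_self 1 hη)
  have := hM μ hμM
  refine ⟨μ, hμM, ?_⟩
  rw [integral_sub (integrable_const 1) (hf μ hμM)]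
  simp only [integral_const, probReal_univ, smul_eq_mul, one_mul]
  linarith

lemma csSup_posterior_eq_one (M : Set (Measure Ω)) {f L : Ω → ℝ} (hf1 : ∀ x, f x ≤ 1)
    (hL0 : ∀ x, 0 ≤ L x) (hL : ∀ μ ∈ M, Integrable L μ)
    (hfL : ∀ μ ∈ M, Integrable (fun x => f x * L x) μ)
    (happrox : ∀ ε > 0, ∃ μ ∈ M, 0 < ∫ x, L x ∂μ ∧
      ∫ x, (1 - f x) * L x ∂μ ≤ ε * ∫ x, L x ∂μ) :
    sSup {r | ∃ μ ∈ M, 0 < ∫ x, L x ∂μ ∧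
      r = (∫ x, f x * L x ∂μ) / (∫ x, L x ∂μ)} = 1 := by
  have hgap : ∀ μ ∈ M, ∫ x, (1 - f x) * L x ∂μ = ∫ x, L x ∂μ - ∫ x, f x * L x ∂μ := by
    intro μ hμ
    simp only [sub_mul, one_mul]
    exact integral_sub (hL μ hμ) (hfL μ hμ)
  obtain ⟨μ₀, hμ₀, hpos₀, -⟩ := happrox 1 one_pos
  refine csSup_eq_of_forall_le_of_forall_lt_exists_gt ⟨_, μ₀, hμ₀, hpos₀, rfl⟩ ?_ ?_
  · rintro _ ⟨μ, hμ, hpos, rfl⟩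
    rw [div_le_one hpos]
    exact integral_mono (hfL μ hμ) (hL μ hμ) fun x => mul_le_of_le_one_left (hL0 x) (hf1 x)
  · intro w hw
    obtain ⟨μ, hμ, hpos, hle⟩ := happrox ((1 - w) / 2) (by linarith)
    refine ⟨_, ⟨μ, hμ, hpos, rfl⟩, ?_⟩
    rw [lt_div_iff₀ hpos]
    nlinarith [hgap μ hμ]

lemma csInf_posterior_eq_zero (M : Set (Measure Ω)) {g h L : Ω → ℝ} (hh0 : ∀ x, 0 ≤ h x)
    (hhg : ∀ x, h x ≤ g x) (hL0 : ∀ x, 0 ≤ L x)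
    (hgL : ∀ μ ∈ M, Integrable (fun x => g x * L x) μ)
    (happrox : ∀ ε > 0, ∃ μ ∈ M, 0 < ∫ x, L x ∂μ ∧
      ∫ x, g x * L x ∂μ ≤ ε * ∫ x, L x ∂μ) :
    sInf {r | ∃ μ ∈ M, 0 < ∫ x, L x ∂μ ∧
      r = (∫ x, h x * L x ∂μ) / (∫ x, L x ∂μ)} = 0 := by
  obtain ⟨μ₀, hμ₀, hpos₀, -⟩ := happrox 1 one_pos
  refine csInf_eq_of_forall_ge_of_forall_gt_exists_lt ⟨_, μ₀, hμ₀, hpos₀, rfl⟩ ?_ ?_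
  · rintro _ ⟨μ, hμ, hpos, rfl⟩
    exact div_nonneg (integral_nonneg fun x => mul_nonneg (hh0 x) (hL0 x)) hpos.le
  · intro w hw
    obtain ⟨μ, hμ, hpos, hle⟩ := happrox (w / 2) (half_pos hw)
    refine ⟨_, ⟨μ, hμ, hpos, rfl⟩, ?_⟩
    have hmono : ∫ x, h x * L x ∂μ ≤ ∫ x, g x * L x ∂μ :=
      integral_mono_of_nonneg (ae_of_all _ fun x => mul_nonneg (hh0 x) (hL0 x)) (hgL μ hμ)
        (ae_of_all _ fun x => mul_le_mul_of_nonneg_right (hhg x) (hL0 x))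
    rw [div_lt_iff₀ hpos]
    nlinarith

end PosteriorMean

theorem vacuous_posterior_outcome_probability_general
    (k : ℕ) (i : Fin k)
    (hei : (fun j => if j = i then (1 : ℝ) else 0) ∈ stdSimplex ℝ (Fin k))
    (M : Set (Measure (stdSimplex ℝ (Fin k))))
    (hMprob : ∀ μ ∈ M, IsProbabilityMeasure μ)
    (L : stdSimplex ℝ (Fin k) → ℝ)
    (hL_nonneg : ∀ θ, 0 ≤ L θ)
    (hL_bdd : ∃ C, ∀ θ, L θ ≤ C)
    (hL_meas : Measurable L)
    (hL_cont : ∃ U ∈ 𝓝 (⟨_, hei⟩ : stdSimplex ℝ (Fin k)), ContinuousOn L U)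
    (hL_pos : 0 < L ⟨_, hei⟩)
    (hprior : sSup {r | ∃ μ ∈ M, r = ∫ θ, (θ : Fin k → ℝ) i ∂μ} = 1) :
    sSup {r | ∃ μ ∈ M, 0 < ∫ θ, L θ ∂μ ∧
        r = (∫ θ, (θ : Fin k → ℝ) i * L θ ∂μ) / (∫ θ, L θ ∂μ)} = 1 ∧
    ∀ j, j ≠ i →
      sInf {r | ∃ μ ∈ M, 0 < ∫ θ, L θ ∂μ ∧
          r = (∫ θ, (θ : Fin k → ℝ) j * L θ ∂μ) / (∫ θ, L θ ∂μ)} = 0 := by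
  obtain ⟨C, hLC⟩ := hL_bdd
  obtain ⟨U, hU, hcont⟩ := hL_cont
  obtain ⟨δ, hδ, hLδ⟩ := stdSimplex.exists_lt_of_one_sub_le_of_continuousAt
    (hcont.continuousAt hU) (if_pos rfl) (half_lt_self hL_pos)
  have hcoord (j : Fin k) : Measurable fun θ : stdSimplex ℝ (Fin k) => θ j :=
    (measurable_pi_apply j).comp measurable_subtype_coe
  have hgap0 (θ : stdSimplex ℝ (Fin k)) : 0 ≤ 1 - θ i :=
    sub_nonneg.2 (stdSimplex.le_one θ i)
  have hgap1 (θ : stdSimplex ℝ (Fin k)) : 1 - θ i ≤ 1 :=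
    sub_le_self 1 (stdSimplex.zero_le θ i)
  have hint (μ) (hμ : μ ∈ M) {f : stdSimplex ℝ (Fin k) → ℝ} (hf : Measurable f)
      (hf0 : ∀ θ, 0 ≤ f θ) (hf1 : ∀ θ, f θ ≤ 1) : Integrable (fun θ => f θ * L θ) μ :=
    have := hMprob μ hμ
    integrable_mul_of_le_one hf hL_meas hf0 hf1 hL_nonneg hLC
  have hLint (μ) (hμ : μ ∈ M) : Integrable L μ :=
    have := hMprob μ hμ
    integrable_of_nonneg_of_le hL_meas hL_nonneg hLC
  have hprior_gap (η : ℝ) (hη : 0 < η) : ∃ μ ∈ M, ∫ θ, 1 - (θ : Fin k → ℝ) i ∂μ < η :=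
    exists_mem_integral_one_sub_lt M hMprob (fun μ hμ => have := hMprob μ hμ
      integrable_of_nonneg_of_le (hcoord i) (stdSimplex.zero_le · i) (stdSimplex.le_one · i))
      hprior hη
  have happrox (ε : ℝ) (hε : 0 < ε) : ∃ μ ∈ M, 0 < ∫ θ, L θ ∂μ ∧
      ∫ θ, (1 - (θ : Fin k → ℝ) i) * L θ ∂μ ≤ ε * ∫ θ, L θ ∂μ :=
    exists_mem_integral_mul_le_mul_integral M hMprob (measurable_const.sub (hcoord i))
      hL_meas hgap0 hgap1 hL_nonneg hLC (half_pos hL_pos) hδ (fun θ hθ => (hLδ θ hθ).le)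
      hprior_gap hε
  exact ⟨csSup_posterior_eq_one M (stdSimplex.le_one · i) hL_nonneg hLint
    (fun μ hμ => hint μ hμ (hcoord i) (stdSimplex.zero_le · i) (stdSimplex.le_one · i))
    happrox,
    fun j hj => csInf_posterior_eq_zero M (stdSimplex.zero_le · j)
      (stdSimplex.apply_le_one_sub · hj) hL_nonneg
      (fun μ hμ => hint μ hμ (measurable_const.sub (hcoord i)) hgap0 hgap1) happrox⟩

/-- **Corollary 3.**
Let `Θ` be the standard simplex in `ℝ^k`, `i` a fixed index, and `e^i ∈ Θ` the
vertex with `i`-th coordinate `1`.  Let `M` be a nonempty set of Borel probability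
measures on `Θ` with vacuous prior upper probability for outcome `i`,
`sup_{μ∈M} ∫ θᵢ dμ = 1`, and let `L : Θ → ℝ` be a nonnegative bounded measurable
likelihood with `L e^i > 0`, continuous on some neighborhood of `e^i` (relative to
`Θ`).  Then `sup { (∫ θᵢ·L dμ)/(∫ L dμ) | μ ∈ M, ∫ L dμ > 0 } = 1`, and
consequently for every `j ≠ i`,
`inf { (∫ θⱼ·L dμ)/(∫ L dμ) | μ ∈ M, ∫ L dμ > 0 } = 0`. -/
theorem vacuous_posterior_outcome_probability
    (k : ℕ) (i : Fin k)
    (hei : (fun j => if j = i then (1 : ℝ) else 0) ∈ stdSimplex ℝ (Fin k))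
    (M : Set (Measure (stdSimplex ℝ (Fin k))))
    (hM : M.Nonempty)
    (hMprob : ∀ μ ∈ M, IsProbabilityMeasure μ)
    (L : stdSimplex ℝ (Fin k) → ℝ)
    (hL_nonneg : ∀ θ, 0 ≤ L θ)
    (hL_bdd : ∃ C, ∀ θ, L θ ≤ C)
    (hL_meas : Measurable L)
    (hL_cont : ∃ U ∈ 𝓝 (⟨_, hei⟩ : stdSimplex ℝ (Fin k)), ContinuousOn L U)
    (hL_pos : 0 < L ⟨_, hei⟩)
    (hprior : sSup {r | ∃ μ ∈ M, r = ∫ θ, (θ : Fin k → ℝ) i ∂μ} = 1) :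
    sSup {r | ∃ μ ∈ M, 0 < ∫ θ, L θ ∂μ ∧
        r = (∫ θ, (θ : Fin k → ℝ) i * L θ ∂μ) / (∫ θ, L θ ∂μ)} = 1 ∧
    ∀ j, j ≠ i →
      sInf {r | ∃ μ ∈ M, 0 < ∫ θ, L θ ∂μ ∧
          r = (∫ θ, (θ : Fin k → ℝ) j * L θ ∂μ) / (∫ θ, L θ ∂μ)} = 0 :=
  vacuous_posterior_outcome_probability_general k i hei M hMprob L hL_nonneg hL_bdd hL_meas hL_cont
    hL_pos hprior
end

section
/- Let Θ be the standard simplex in ℝ^k, let n'₁,…,n'_k be nonnegative integers with N' = Σ_i n'_i > 0, and let g(θ) = ∏_{i=1}^k θ_i^{n'_i}. Let M be a nonempty set of Borel probability measures on Θ and let L : Θ → ℝ be a likelihood that is continuous and strictly positive on all of Θ. If the prior predictive probabilities of the dataset with frequencies (n'₁,…,n'_k) are vacuous, i.e. inf_{μ∈M} ∫_Θ g dμ = 0 and sup_{μ∈M} ∫_Θ g dμ = ∏_{i=1}^k (n'_i/N')^{n'_i}, then the posterior predictive probabilities are vacuous as well: inf_{μ∈M} (∫_Θ g·L dμ)/(∫_Θ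 L dμ) = 0 and sup_{μ∈M} (∫_Θ g·L dμ)/(∫_Θ L dμ) = ∏_{i=1}^k (n'_i/N')^{n'_i} (note ∫_Θ L dμ > 0 automatically for every μ since L is continuous and strictly positive on the compact set Θ). -/
/-!
By weighted AM–GM, `0 ≤ g ≤ G := ∏ᵢ (n'ᵢ/N')^n'ᵢ` on the simplex. The likelihood is continuous
and positive on a compact set, so `m ≤ L ≤ M'` for constants `0 < m ≤ M'`. Hence for every prior
`μ` the posterior expectation `P_μ g = ∫ g L dμ / ∫ L dμ` satisfies `P_μ g ≤ (M'/m) ∫ g dμ`, and,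
applying this to `G - g`, `G - P_μ g ≤ (M'/m) (G - ∫ g dμ)`. Priors whose predictive probability
is close to `0` (resp. `G`) therefore have posterior predictive probability close to `0`
(resp. `G`).
-/

open MeasureTheory

theorem prod_pow_le_prod_div_sum_pow {ι : Type*} [Fintype ι] (n : ι → ℕ) (hn : 0 < ∑ i, n i)
    {θ : ι → ℝ} (hθ : θ ∈ stdSimplex ℝ ι) :
    ∏ i, θ i ^ n i ≤ ∏ i, ((n i : ℝ) / ((∑ j, n j : ℕ) : ℝ)) ^ n i := by
  set N := ∑ j, n j
  set w : ι → ℝ := fun i => (n i : ℝ) / N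
  -- if `n i = 0` then `z i = θ i / 0 = 0`, harmless since it enters with exponent `w i = 0`
  set z : ι → ℝ := fun i => θ i / w i
  have hN : (0 : ℝ) < N := by exact_mod_cast hn
  have hw0 : ∀ i, 0 ≤ w i := fun i => by positivity
  have hw1 : ∑ i, w i = 1 := by
    simp only [w, ← Finset.sum_div, ← Nat.cast_sum]
    exact div_self hN.ne'
  have hz0 : ∀ i, 0 ≤ z i := fun i => div_nonneg (hθ.1 i) (hw0 i)
  have hwz : ∀ i, w i * z i ≤ θ i := fun i => by
    rcases eq_or_ne (w i) 0 with h | h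
    · simpa [h] using hθ.1 i
    · exact (mul_div_cancel₀ _ h).le
  have hθw : ∀ i, θ i ^ n i = w i ^ n i * (z i ^ w i) ^ N := fun i => by
    have hwN : w i * N = n i := div_mul_cancel₀ _ hN.ne'
    rw [← Real.rpow_natCast (z i ^ w i), ← Real.rpow_mul (hz0 i), hwN, Real.rpow_natCast, ← mul_pow]
    rcases eq_or_ne (n i) 0 with h | h
    · simp [h]
    · have : w i ≠ 0 := div_ne_zero (by exact_mod_cast h) hN.ne'
      rw [mul_div_cancel₀ _ this]
  have hzw : ∏ i, z i ^ w i ≤ 1 :=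
    (Real.geom_mean_le_arith_mean_weighted _ w z (fun i _ => hw0 i) hw1 (fun i _ => hz0 i)).trans
      ((Finset.sum_le_sum fun i _ => hwz i).trans hθ.2.le)
  calc ∏ i, θ i ^ n i = (∏ i, w i ^ n i) * (∏ i, z i ^ w i) ^ N := by
        rw [← Finset.prod_pow, ← Finset.prod_mul_distrib]
        exact Finset.prod_congr rfl fun i _ => hθw i
    _ ≤ ∏ i, w i ^ n i :=
        mul_le_of_le_one_right (Finset.prod_nonneg fun i _ => pow_nonneg (hw0 i) _)
          (pow_le_one₀ (Finset.prod_nonneg fun i _ => Real.rpow_nonneg (hz0 i) _) hzw)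

section Transfer

variable {α : Type*} {S : Set α} {f h : α → ℝ} {C : ℝ}

theorem sInf_eq_zero_of_le_const_mul (hS : S.Nonempty) (hC : 0 < C) (h0 : ∀ a ∈ S, 0 ≤ h a)
    (hhf : ∀ a ∈ S, h a ≤ C * f a) (hf : sInf {r | ∃ a ∈ S, r = f a} = 0) :
    sInf {r | ∃ a ∈ S, r = h a} = 0 := by
  obtain ⟨a₀, ha₀⟩ := hS
  have hne : {r | ∃ a ∈ S, r = f a}.Nonempty := ⟨f a₀, a₀, ha₀, rfl⟩
  refine le_antisymm (le_of_forall_pos_le_add fun ε hε => ?_) (Real.sInf_nonneg ?_)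
  · obtain ⟨_, ⟨a, ha, rfl⟩, hfa⟩ := exists_lt_of_csInf_lt hne (hf ▸ div_pos hε hC)
    have hbdd : BddBelow {r | ∃ a ∈ S, r = h a} := ⟨0, by rintro _ ⟨a, ha, rfl⟩; exact h0 a ha⟩
    calc sInf {r | ∃ a ∈ S, r = h a} ≤ h a := csInf_le hbdd ⟨a, ha, rfl⟩
      _ ≤ C * f a := hhf a ha
      _ ≤ 0 + ε := by rw [zero_add]; exact ((lt_div_iff₀' hC).1 hfa).le
  · rintro _ ⟨a, ha, rfl⟩
    exact h0 a ha

theorem sSup_eq_of_sub_le_const_mul {G : ℝ} (hS : S.Nonempty) (hC : 0 < C) (hG : ∀ a ∈ S, h a ≤ G)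
    (hhf : ∀ a ∈ S, G - h a ≤ C * (G - f a)) (hf : sSup {r | ∃ a ∈ S, r = f a} = G) :
    sSup {r | ∃ a ∈ S, r = h a} = G := by
  obtain ⟨a₀, ha₀⟩ := hS
  have hne : {r | ∃ a ∈ S, r = f a}.Nonempty := ⟨f a₀, a₀, ha₀, rfl⟩
  have hbdd : BddAbove {r | ∃ a ∈ S, r = h a} := ⟨G, by rintro _ ⟨a, ha, rfl⟩; exact hG a ha⟩
  refine le_antisymm (csSup_le ⟨h a₀, a₀, ha₀, rfl⟩ ?_) (le_of_forall_pos_le_add fun ε hε => ?_)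
  · rintro _ ⟨a, ha, rfl⟩
    exact hG a ha
  · obtain ⟨_, ⟨a, ha, rfl⟩, hfa⟩ := exists_lt_of_lt_csSup hne
      (hf ▸ sub_lt_self G (div_pos hε hC))
    have hlt : C * (G - f a) < ε := (lt_div_iff₀' hC).1 (by linarith)
    have hle : h a ≤ sSup {r | ∃ a ∈ S, r = h a} := le_csSup hbdd ⟨a, ha, rfl⟩
    linarith [hhf a ha]

end Transfer

noncomputable def posteriorExpectation {X : Type*} [MeasurableSpace X] (μ : Measure X)
    (L g : X → ℝ) : ℝ :=
  (∫ x, g x * L x ∂μ) / ∫ x, L x ∂μ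

section Posterior

variable {X : Type*} [MeasurableSpace X] {μ : Measure X} {L g : X → ℝ} {m M c : ℝ}

theorem posteriorExpectation_nonneg (hL : ∀ x, 0 ≤ L x) (hg : ∀ x, 0 ≤ g x) :
    0 ≤ posteriorExpectation μ L g :=
  div_nonneg (integral_nonneg fun x => mul_nonneg (hg x) (hL x)) (integral_nonneg hL)

theorem posteriorExpectation_const_sub (hL : Integrable L μ)
    (hgL : Integrable (fun x => g x * L x) μ) (hL0 : ∫ x, L x ∂μ ≠ 0) (c : ℝ) :
    posteriorExpectation μ L (fun x => c - g x) = c - posteriorExpectation μ L g := by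
  simp only [posteriorExpectation, sub_mul]
  rw [integral_sub (hL.const_mul c) hgL, integral_const_mul, sub_div, mul_div_cancel_right₀ _ hL0]

theorem MeasureTheory.Integrable.mul_of_nonneg_of_le_s10 (hg : Integrable g μ) (hL : Integrable L μ)
    (hL0 : ∀ x, 0 ≤ L x) (hLM : ∀ x, L x ≤ M) : Integrable (fun x => g x * L x) μ :=
  hg.mul_bdd hL.aestronglyMeasurable
    (ae_of_all _ fun x => (Real.norm_of_nonneg (hL0 x)).trans_le (hLM x))

variable [IsProbabilityMeasure μ]

theorem le_integral_of_forall_le (hL : Integrable L μ) (hmL : ∀ x, m ≤ L x) :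
    m ≤ ∫ x, L x ∂μ := by
  simpa using integral_mono (integrable_const m) hL hmL

theorem posteriorExpectation_le_mul_integral (hg : Integrable g μ) (hL : Integrable L μ)
    (hm : 0 < m) (hmL : ∀ x, m ≤ L x) (hLM : ∀ x, L x ≤ M) (hg0 : ∀ x, 0 ≤ g x) :
    posteriorExpectation μ L g ≤ M / m * ∫ x, g x ∂μ := by
  have hL0 : ∀ x, 0 ≤ L x := fun x => hm.le.trans (hmL x)
  have hnum : ∫ x, g x * L x ∂μ ≤ M * ∫ x, g x ∂μ := by
    rw [← integral_const_mul]
    exact integral_mono (hg.mul_of_nonneg_of_le_s10 hL hL0 hLM) (hg.const_mul M)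
      fun x => by nlinarith [hg0 x, hLM x]
  calc posteriorExpectation μ L g ≤ (∫ x, g x * L x ∂μ) / m :=
        div_le_div_of_nonneg_left (integral_nonneg fun x => mul_nonneg (hg0 x) (hL0 x)) hm
          (le_integral_of_forall_le hL hmL)
    _ ≤ M * (∫ x, g x ∂μ) / m := div_le_div_of_nonneg_right hnum hm.le
    _ = M / m * ∫ x, g x ∂μ := mul_div_right_comm _ _ _

theorem posteriorExpectation_le_of_le (hg : Integrable g μ) (hL : Integrable L μ)
    (hm : 0 < m) (hmL : ∀ x, m ≤ L x) (hLM : ∀ x, L x ≤ M) (hgc : ∀ x, g x ≤ c) :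
    posteriorExpectation μ L g ≤ c := by
  have hL0 : ∀ x, 0 ≤ L x := fun x => hm.le.trans (hmL x)
  have hIL : 0 < ∫ x, L x ∂μ := hm.trans_le (le_integral_of_forall_le hL hmL)
  have := posteriorExpectation_nonneg (μ := μ) hL0 fun x => sub_nonneg.2 (hgc x)
  rwa [posteriorExpectation_const_sub hL (hg.mul_of_nonneg_of_le_s10 hL hL0 hLM) hIL.ne', sub_nonneg]
    at this

theorem sub_posteriorExpectation_le_mul (hg : Integrable g μ) (hL : Integrable L μ)
    (hm : 0 < m) (hmL : ∀ x, m ≤ L x) (hLM : ∀ x, L x ≤ M) (hgc : ∀ x, g x ≤ c) :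
    c - posteriorExpectation μ L g ≤ M / m * (c - ∫ x, g x ∂μ) := by
  have hL0 : ∀ x, 0 ≤ L x := fun x => hm.le.trans (hmL x)
  have hIL : 0 < ∫ x, L x ∂μ := hm.trans_le (le_integral_of_forall_le hL hmL)
  have := posteriorExpectation_le_mul_integral (g := fun x => c - g x)
    ((integrable_const c).sub hg) hL hm hmL hLM fun x => sub_nonneg.2 (hgc x)
  rwa [posteriorExpectation_const_sub hL (hg.mul_of_nonneg_of_le_s10 hL hL0 hLM) hIL.ne',
    integral_sub (integrable_const c) hg, integral_const, probReal_univ, one_smul] at this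

end Posterior

/-- **Corollary 5 (main corollary).**
Let `Θ` be the standard simplex in `ℝ^k`, `n'₁, …, n'_k` nonnegative integers with
`N' = Σᵢ n'ᵢ > 0`, and `g θ = ∏ᵢ θᵢ ^ n'ᵢ`.  Let `M` be a nonempty set of Borel
probability measures on `Θ` and let the likelihood `L : Θ → ℝ` be continuous and
strictly positive on all of `Θ`.  If the prior predictive probabilities of the
dataset with frequencies `(n'₁,…,n'_k)` are vacuous, i.e.
`inf_{μ∈M} ∫ g dμ = 0` and `sup_{μ∈M} ∫ g dμ = ∏ᵢ (n'ᵢ/N')^{n'ᵢ}`, then the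
posterior predictive probabilities are vacuous as well:
`inf_{μ∈M} (∫ g·L dμ)/(∫ L dμ) = 0` and
`sup_{μ∈M} (∫ g·L dμ)/(∫ L dμ) = ∏ᵢ (n'ᵢ/N')^{n'ᵢ}`. -/
theorem no_learning_of_predictive_probabilities
    (k : ℕ) (n' : Fin k → ℕ) (hN' : 0 < ∑ i, n' i)
    (M : Set (Measure (stdSimplex ℝ (Fin k))))
    (hM : M.Nonempty)
    (hMprob : ∀ μ ∈ M, IsProbabilityMeasure μ)
    (L : stdSimplex ℝ (Fin k) → ℝ)
    (hL_cont : Continuous L)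
    (hL_pos : ∀ θ, 0 < L θ)
    (hprior_inf : sInf {r | ∃ μ ∈ M, r = ∫ θ, ∏ i, (θ : Fin k → ℝ) i ^ n' i ∂μ} = 0)
    (hprior_sup : sSup {r | ∃ μ ∈ M, r = ∫ θ, ∏ i, (θ : Fin k → ℝ) i ^ n' i ∂μ}
        = ∏ i, ((n' i : ℝ) / ((∑ j, n' j : ℕ) : ℝ)) ^ n' i) :
    sInf {r | ∃ μ ∈ M,
        r = (∫ θ, (∏ i, (θ : Fin k → ℝ) i ^ n' i) * L θ ∂μ) / (∫ θ, L θ ∂μ)} = 0 ∧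
    sSup {r | ∃ μ ∈ M,
        r = (∫ θ, (∏ i, (θ : Fin k → ℝ) i ^ n' i) * L θ ∂μ) / (∫ θ, L θ ∂μ)}
      = ∏ i, ((n' i : ℝ) / ((∑ j, n' j : ℕ) : ℝ)) ^ n' i := by
  have : CompactSpace (stdSimplex ℝ (Fin k)) :=
    isCompact_iff_compactSpace.mp (isCompact_stdSimplex _ _)
  obtain ⟨m, hm, hmL⟩ := isCompact_univ.exists_forall_le' hL_cont.continuousOn
    fun θ (_ : θ ∈ Set.univ) => hL_pos θ
  replace hmL (θ) : m ≤ L θ := hmL θ trivial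
  obtain ⟨Mx, hLM⟩ := (isCompact_range hL_cont).bddAbove
  replace hLM (θ) : L θ ≤ Mx := hLM ⟨θ, rfl⟩
  obtain ⟨μ₀, hμ₀⟩ := hM
  have hC : 0 < Mx / m := by
    obtain ⟨θ₀⟩ := @nonempty_of_isProbabilityMeasure _ _ μ₀ (hMprob μ₀ hμ₀)
    exact div_pos (hm.trans_le ((hmL θ₀).trans (hLM θ₀))) hm
  have integrable (μ) (hμ : μ ∈ M) (f : stdSimplex ℝ (Fin k) → ℝ) (hf : Continuous f) :
      Integrable f μ :=
    have := hMprob μ hμ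
    hf.integrable_of_hasCompactSupport (.of_compactSpace f)
  set g : stdSimplex ℝ (Fin k) → ℝ := fun θ => ∏ i, (θ : Fin k → ℝ) i ^ n' i
  have hg : Continuous g :=
    continuous_finsetProd _ fun i _ => ((continuous_apply i).comp continuous_subtype_val).pow _
  have hg0 (θ) : 0 ≤ g θ := Finset.prod_nonneg fun i _ => pow_nonneg (θ.2.1 i) _
  have hgG (θ : stdSimplex ℝ (Fin k)) := prod_pow_le_prod_div_sum_pow n' hN' θ.2
  refine ⟨sInf_eq_zero_of_le_const_mul ⟨μ₀, hμ₀⟩ hC ?_ ?_ hprior_inf,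
    sSup_eq_of_sub_le_const_mul ⟨μ₀, hμ₀⟩ hC ?_ ?_ hprior_sup⟩ <;>
    intro μ hμ <;> have := hMprob μ hμ
  · exact posteriorExpectation_nonneg (fun θ => (hL_pos θ).le) hg0
  · exact posteriorExpectation_le_mul_integral (integrable μ hμ g hg) (integrable μ hμ L hL_cont)
      hm hmL hLM hg0
  · exact posteriorExpectation_le_of_le (integrable μ hμ g hg) (integrable μ hμ L hL_cont)
      hm hmL hLM hgG
  · exact sub_posteriorExpectation_le_mul (integrable μ hμ g hg) (integrable μ hμ L hL_cont)
      hm hmL hLM hgG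
end
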